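/- arXiv:2411.11703 — 2 statements merged into one kernel-verified Lean document; each statement's English description precedes it below -/
import Mathlib

section
/- Let K ≥ 1, let Ω = {−1,1}^K ⊂ ℝ^K be the vertex set of the hypercube, and define σ(ω) = Π_{k=1}^K ω_k. Then for every ω ∈ Ω, the set Ω_ω of nearest neighbours of ω in Ω consists exactly of the K points obtained from ω by changing the sign of exactly one coordinate, each at distance 2 from ω, and σ(ω) Σ_{ϖ∈Ω_ω} σ(ϖ)(ϖ−ω)/|ϖ−ω| = ω. In particular the hypercube with the alternating (product) signs satisfies the symmetry hypothesis of the multi-soliton construction. -/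
open scoped BigOperators

/-! For vertices of the cube `{-1,1}^K`, `‖ϖ - ω‖² = 4 · hammingDist ϖ ω`, so the nearest
neighbours of `ω` are the `K` one-coordinate flips, all at distance `2`. Flipping coordinate `i`
negates `σ` and moves `ω` by `-2 ω_i e_i`; summing over `i` gives
`σ(ω) ∑ σ(ϖ)(ϖ - ω)/2 = σ(ω)² ω = ω`. -/

/-- The set of nearest neighbours of `ω` in a configuration `Ω ⊂ ℝ^d`:
the points of `Ω \ {ω}` minimizing the distance to `ω`. -/
def nearestNeighbours {E : Type*} [NormedAddCommGroup E] (Ω : Set E) (ω : E) : Set E :=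
  {ϖ ∈ Ω | ϖ ≠ ω ∧ ∀ ϖ' ∈ Ω, ϖ' ≠ ω → ‖ϖ - ω‖ ≤ ‖ϖ' - ω‖}

theorem nearestNeighbours_eq_of_forall_norm_sub {E : Type*} [NormedAddCommGroup E]
    {Ω S : Set E} {ω : E} {r : ℝ} (hS : S.Nonempty) (hSΩ : S ⊆ Ω) (hωS : ω ∉ S)
    (hS_norm : ∀ ϖ ∈ S, ‖ϖ - ω‖ = r)
    (hΩ_norm : ∀ ϖ ∈ Ω, ϖ ≠ ω → ϖ ∉ S → r < ‖ϖ - ω‖) :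
    nearestNeighbours Ω ω = S := by
  ext ϖ
  constructor
  · rintro ⟨hϖΩ, hϖω, hmin⟩
    by_contra hϖS
    obtain ⟨s, hs⟩ := hS
    have := hmin s (hSΩ hs) (ne_of_mem_of_not_mem hs hωS)
    linarith [hS_norm s hs, hΩ_norm ϖ hϖΩ hϖω hϖS]
  · intro hϖS
    refine ⟨hSΩ hϖS, ne_of_mem_of_not_mem hϖS hωS, fun ϖ' hϖ'Ω hϖ'ω => ?_⟩
    rw [hS_norm ϖ hϖS]
    by_cases hϖ'S : ϖ' ∈ S
    · exact (hS_norm ϖ' hϖ'S).ge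
    · exact (hΩ_norm ϖ' hϖ'Ω hϖ'ω hϖ'S).le

theorem exists_forall_ne_eq_of_hammingDist_eq_one {ι : Type*} [Fintype ι] {β : ι → Type*}
    [∀ i, DecidableEq (β i)] {x y : ∀ i, β i} (h : hammingDist x y = 1) :
    ∃ i, x i ≠ y i ∧ ∀ j ≠ i, x j = y j := by
  obtain ⟨i, hi⟩ := Finset.card_eq_one.mp h
  have hdiff : ∀ j, x j ≠ y j ↔ j = i := fun j => by
    simpa using Finset.ext_iff.mp hi j
  exact ⟨i, (hdiff i).2 rfl, fun j hj => not_not.mp (mt (hdiff j).1 hj)⟩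

variable {ι : Type*}

section flipCoord

variable [DecidableEq ι]

def flipCoord (ω : EuclideanSpace ℝ ι) (i : ι) : EuclideanSpace ℝ ι :=
  WithLp.toLp 2 (Function.update ω i (-(ω i)))

theorem flipCoord_apply (ω : EuclideanSpace ℝ ι) (i j : ι) :
    flipCoord ω i j = if j = i then -(ω i) else ω j := by
  simp [flipCoord, Function.update_apply]

theorem flipCoord_apply_self (ω : EuclideanSpace ℝ ι) (i : ι) : flipCoord ω i i = -ω i := by
  simp [flipCoord_apply]

theorem flipCoord_apply_of_ne (ω : EuclideanSpace ℝ ι) {i j : ι} (h : j ≠ i) :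
    flipCoord ω i j = ω j := by
  simp [flipCoord_apply, h]

theorem flipCoord_ne_self {ω : EuclideanSpace ℝ ι} {i : ι} (hω : ω i ≠ 0) :
    flipCoord ω i ≠ ω := fun h => by
  have hi : flipCoord ω i i = ω i := by rw [h]
  rw [flipCoord_apply_self] at hi
  exact hω (by linarith)

theorem flipCoord_injective {ω : EuclideanSpace ℝ ι} (hω : ∀ i, ω i ≠ 0) :
    Function.Injective (flipCoord ω) := by
  intro i j hij
  by_contra hne
  have hi : flipCoord ω i i = flipCoord ω j i := by rw [hij]
  rw [flipCoord_apply_self, flipCoord_apply_of_ne ω hne] at hi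
  exact hω i (by linarith)

theorem flipCoord_sub_self (ω : EuclideanSpace ℝ ι) (i : ι) :
    flipCoord ω i - ω = EuclideanSpace.single i (-2 * ω i) := by
  ext j
  by_cases h : j = i
  · subst h
    rw [PiLp.sub_apply, flipCoord_apply_self, PiLp.single_eq_same]
    ring
  · simp [flipCoord_apply, h]

variable [Fintype ι]

theorem norm_flipCoord_sub_self (ω : EuclideanSpace ℝ ι) (i : ι) :
    ‖flipCoord ω i - ω‖ = 2 * |ω i| := by
  simp [flipCoord_sub_self]

theorem sum_flipCoord_sub_self (ω : EuclideanSpace ℝ ι) :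
    ∑ i, (flipCoord ω i - ω) = (-2 : ℝ) • ω := by
  ext j
  simp [flipCoord_sub_self, WithLp.ofLp_sum]

theorem prod_flipCoord (ω : EuclideanSpace ℝ ι) (i : ι) :
    ∏ j, flipCoord ω i j = -∏ j, ω j := by
  simp only [flipCoord, PiLp.toLp_apply, Finset.prod_update_of_mem (Finset.mem_univ i),
    ← Finset.mul_prod_erase Finset.univ _ (Finset.mem_univ i), Finset.sdiff_singleton_eq_erase]
  ring

end flipCoord

def IsSignVector (ω : EuclideanSpace ℝ ι) : Prop := ∀ i, ω i = 1 ∨ ω i = -1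

theorem isSignVector_flipCoord [DecidableEq ι] {ω : EuclideanSpace ℝ ι} (hω : IsSignVector ω)
    (i : ι) : IsSignVector (flipCoord ω i) := by
  intro j
  rw [flipCoord_apply]
  split_ifs with h
  · subst h; rcases hω j with h | h <;> simp [h]
  · exact hω j

namespace IsSignVector

variable {ω ϖ : EuclideanSpace ℝ ι}

theorem ne_zero (hω : IsSignVector ω) (i : ι) : ω i ≠ 0 := by
  rcases hω i with h | h <;> simp [h]

theorem abs_eq_one (hω : IsSignVector ω) (i : ι) : |ω i| = 1 := by
  rcases hω i with h | h <;> simp [h]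

theorem mul_self_eq_one (hω : IsSignVector ω) (i : ι) : ω i * ω i = 1 := by
  rcases hω i with h | h <;> simp [h]

theorem eq_neg_of_ne (hω : IsSignVector ω) (hϖ : IsSignVector ϖ) {i : ι} (h : ϖ i ≠ ω i) :
    ϖ i = -ω i := by
  rcases hω i with h1 | h1 <;> rcases hϖ i with h2 | h2 <;> simp_all

theorem prod_mul_self [Fintype ι] (hω : IsSignVector ω) : (∏ i, ω i) * ∏ i, ω i = 1 := by
  rw [← Finset.prod_mul_distrib]
  exact Finset.prod_eq_one fun i _ => hω.mul_self_eq_one i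

theorem norm_sub_sq [Fintype ι] (hω : IsSignVector ω) (hϖ : IsSignVector ϖ) :
    ‖ϖ - ω‖ ^ 2 = 4 * hammingDist ϖ.ofLp ω.ofLp := by
  rw [EuclideanSpace.real_norm_sq_eq, hammingDist, Finset.card_filter]
  push_cast
  rw [Finset.mul_sum]
  refine Finset.sum_congr rfl fun i _ => ?_
  split_ifs with h
  · rw [PiLp.sub_apply, eq_neg_of_ne hω hϖ h]
    linear_combination 4 * hω.mul_self_eq_one i
  · simp [not_not.mp h]

variable [DecidableEq ι]

theorem norm_flipCoord_sub_self [Fintype ι] (hω : IsSignVector ω) (i : ι) :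
    ‖flipCoord ω i - ω‖ = 2 := by
  rw [_root_.norm_flipCoord_sub_self, hω.abs_eq_one, mul_one]

theorem eq_flipCoord_of_hammingDist_eq_one [Fintype ι] (hω : IsSignVector ω)
    (hϖ : IsSignVector ϖ) (h : hammingDist ϖ.ofLp ω.ofLp = 1) :
    ∃ i, ϖ = flipCoord ω i := by
  obtain ⟨i, hi, hrest⟩ := exists_forall_ne_eq_of_hammingDist_eq_one h
  refine ⟨i, ?_⟩
  ext j
  rw [flipCoord_apply]
  split_ifs with hj
  · subst hj; exact eq_neg_of_ne hω hϖ hi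
  · exact hrest j hj

theorem two_lt_norm_sub [Fintype ι] (hω : IsSignVector ω) (hϖ : IsSignVector ϖ) (hne : ϖ ≠ ω)
    (hflip : ϖ ∉ Set.range (flipCoord ω)) : 2 < ‖ϖ - ω‖ := by
  have hdist : 2 ≤ hammingDist ϖ.ofLp ω.ofLp := by
    have h0 : hammingDist ϖ.ofLp ω.ofLp ≠ 0 :=
      hammingDist_ne_zero.mpr fun h => hne (WithLp.ofLp_injective 2 h)
    have h1 : hammingDist ϖ.ofLp ω.ofLp ≠ 1 := fun h =>
      hflip ((eq_flipCoord_of_hammingDist_eq_one hω hϖ h).imp fun _ => Eq.symm)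
    omega
  have hsq : (2 : ℝ) ^ 2 < ‖ϖ - ω‖ ^ 2 := by
    rw [norm_sub_sq hω hϖ]
    have : (2 : ℝ) ≤ hammingDist ϖ.ofLp ω.ofLp := by exact_mod_cast hdist
    linarith
  exact lt_of_pow_lt_pow_left₀ 2 (norm_nonneg _) hsq

theorem nearestNeighbours_eq [Fintype ι] [Nonempty ι] (hω : IsSignVector ω) :
    nearestNeighbours {ϖ | IsSignVector ϖ} ω = Set.range (flipCoord ω) := by
  refine nearestNeighbours_eq_of_forall_norm_sub (r := 2) (Set.range_nonempty _) ?_ ?_ ?_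
    fun ϖ hϖ hne hflip => two_lt_norm_sub hω hϖ hne hflip
  · rintro _ ⟨i, rfl⟩
    exact isSignVector_flipCoord hω i
  · rintro ⟨i, hi⟩
    exact flipCoord_ne_self (hω.ne_zero i) hi
  · rintro _ ⟨i, rfl⟩
    exact hω.norm_flipCoord_sub_self i

end IsSignVector

/-- **The hypercube with alternating (product) signs satisfies the symmetry hypothesis of
the multi-soliton construction.** For `Ω = {−1,1}^K` and `σ(ω) = ∏ k ω_k`, the nearest
neighbours of `ω` are exactly the `K` points obtained by flipping one coordinate, each at
distance `2`, and `σ(ω) ∑_{ϖ ∈ Ω_ω} σ(ϖ)(ϖ−ω)/|ϖ−ω| = ω` (i.e. the hypothesis holds with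
`γ = 1`). -/
theorem hypercube_alternating_symmetry (K : ℕ) (hK : 1 ≤ K)
    (Ω : Set (EuclideanSpace ℝ (Fin K)))
    (hΩ : Ω = {ω | ∀ i, ω i = 1 ∨ ω i = -1})
    (σ : EuclideanSpace ℝ (Fin K) → ℝ)
    (hσ : ∀ ω, σ ω = ∏ i, ω i) :
    ∀ ω ∈ Ω,
      nearestNeighbours Ω ω =
        {ϖ | ∃ i : Fin K, ϖ = WithLp.toLp 2 (Function.update ω i (-(ω i)))} ∧
      (∀ ϖ ∈ nearestNeighbours Ω ω, ‖ϖ - ω‖ = 2) ∧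
      σ ω • (∑ᶠ ϖ ∈ nearestNeighbours Ω ω, σ ϖ • (‖ϖ - ω‖⁻¹ • (ϖ - ω))) = ω := by
  obtain rfl : Ω = {ϖ | IsSignVector ϖ} := hΩ
  rintro ω (hω : IsSignVector ω)
  have : Nonempty (Fin K) := ⟨⟨0, hK⟩⟩
  have hNN := hω.nearestNeighbours_eq
  have hnorm : ∀ i, ‖flipCoord ω i - ω‖ = 2 := hω.norm_flipCoord_sub_self
  refine ⟨?_, ?_, ?_⟩
  · rw [hNN]
    ext ϖ
    exact exists_congr fun i => eq_comm
  · rw [hNN]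
    rintro _ ⟨i, rfl⟩
    exact hnorm i
  · rw [hNN, finsum_mem_range (flipCoord_injective hω.ne_zero), finsum_eq_sum_of_fintype]
    simp only [hσ, hnorm, prod_flipCoord]
    rw [← Finset.smul_sum, ← Finset.smul_sum, sum_flipCoord_sub_self, smul_smul, smul_smul,
      smul_smul]
    convert one_smul ℝ ω using 2
    linear_combination hω.prod_mul_self
end

section
/- Let K ≥ 1 and let Ω = {0} ∪ {e_1,−e_1,…,e_K,−e_K} ⊂ ℝ^K, where e_1,…,e_K is the canonical basis (the vertices of the regular orthoplex together with its center). Set σ(0) = −1 and σ(ω) = +1 for every vertex ω ≠ 0. Then for every vertex ω ≠ 0 the set Ω_ω of nearest neighbours of ω in Ω equals {0}, the set Ω_0 of nearest neighbours of 0 equals the set of all 2K vertices, and for every ω ∈ Ω, σ(ω) Σ_{ϖ∈Ω_ω} σ(ϖ)(ϖ−ω)/|ϖ−ω| = ω. In particular the orthoplex with a center, the center carrying the opposite sign, satisfies the symmetry hypothesis of the multi-soliton construction with γ = 1. -/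
open scoped BigOperators

/-! A centred configuration `{0} ∪ S` whose outer points `S` lie on the unit sphere at mutual
distances greater than one has the centre as the unique nearest neighbour of each outer point,
and all of `S` as the nearest neighbours of the centre. For the orthoplex `S = {±eᵢ}` the
distances are `√2` or `2`. With `σ(0) = -1` and `σ = 1` on `S`, the identity at an outer point `ω`
is `(-1) • (0 - ω) = ω`, and at the centre it is `-∑ S = 0`, because `S = -S`. -/

section NearestNeighbours

variable {E : Type*} [NormedAddCommGroup E] {S : Set E}

theorem nearestNeighbours_insert_zero_of_mem (hS : S ⊆ Metric.sphere 0 1)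
    (hsep : S.Pairwise fun v w => 1 < ‖v - w‖) {ω : E} (hω : ω ∈ S) :
    nearestNeighbours (insert 0 S) ω = {0} := by
  have hω1 : ‖0 - ω‖ = 1 := by rw [zero_sub, norm_neg, ← mem_sphere_zero_iff_norm]; exact hS hω
  have hω0 : (0 : E) ≠ ω := by rintro rfl; simp at hω1
  ext ϖ
  simp only [nearestNeighbours, Set.mem_ofPred_eq, Set.mem_insert_iff, Set.mem_singleton_iff,
    forall_eq_or_imp]
  constructor
  · rintro ⟨rfl | hϖ, hϖω, hcentre, -⟩
    · rfl
    · linarith [hsep hϖ hω hϖω, hω1 ▸ hcentre hω0]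
  · rintro rfl
    exact ⟨Or.inl rfl, hω0, fun _ => le_rfl,
      fun v hv hvω => hω1 ▸ (hsep hv hω hvω).le⟩

theorem nearestNeighbours_insert_zero_zero (hS : S ⊆ Metric.sphere 0 1) :
    nearestNeighbours (insert 0 S) 0 = S := by
  have hnorm : ∀ v ∈ S, ‖v‖ = 1 := fun v hv => mem_sphere_zero_iff_norm.mp (hS hv)
  ext ϖ
  simp only [nearestNeighbours, Set.mem_ofPred_eq, Set.mem_insert_iff, forall_eq_or_imp, sub_zero]
  constructor
  · rintro ⟨rfl | hϖ, hϖ0, -⟩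
    · exact absurd rfl hϖ0
    · exact hϖ
  · intro hϖ
    refine ⟨Or.inr hϖ, ?_, fun h => absurd rfl h, fun v hv _ => by rw [hnorm ϖ hϖ, hnorm v hv]⟩
    rintro rfl
    simpa using hnorm 0 hϖ

end NearestNeighbours

theorem finsum_mem_eq_zero_of_neg_eq {G : Type*} [AddCommGroup G] [IsAddTorsionFree G]
    {S : Set G} (hS : -S = S) : ∑ᶠ x ∈ S, x = 0 := by
  have h : ∑ᶠ x ∈ S, x = ∑ᶠ x ∈ S, -x := by
    conv_lhs => rw [← hS, ← Set.image_neg_eq_neg]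
    exact finsum_mem_image neg_injective.injOn
  simp only [finsum_neg_distrib] at h
  exact self_eq_neg.mp h

section Orthoplex

variable (ι : Type*) [DecidableEq ι]

def orthoplexVertices : Set (EuclideanSpace ℝ ι) :=
  {v | ∃ i : ι, v = EuclideanSpace.single i (1 : ℝ) ∨ v = -EuclideanSpace.single i (1 : ℝ)}

theorem neg_orthoplexVertices : -orthoplexVertices ι = orthoplexVertices ι := by
  ext v
  simp only [orthoplexVertices, Set.mem_neg, Set.mem_ofPred_eq, neg_eq_iff_eq_neg, neg_neg]
  exact exists_congr fun i => or_comm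

variable [Fintype ι]

theorem orthoplexVertices_subset_sphere : orthoplexVertices ι ⊆ Metric.sphere 0 1 := by
  rintro v ⟨i, rfl | rfl⟩ <;> simp

variable {ι}

theorem inner_nonpos_of_mem_orthoplexVertices {v w : EuclideanSpace ℝ ι}
    (hv : v ∈ orthoplexVertices ι) (hw : w ∈ orthoplexVertices ι) (hvw : v ≠ w) :
    inner ℝ v w ≤ (0 : ℝ) := by
  have hsingle (i j : ι) : inner ℝ (EuclideanSpace.single i (1 : ℝ))
      (EuclideanSpace.single j (1 : ℝ)) = if i = j then (1 : ℝ) else 0 :=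
    orthonormal_iff_ite.mp EuclideanSpace.orthonormal_single i j
  -- Equal indices force opposite signs (inner product `-1`); distinct indices are orthogonal.
  obtain ⟨i, rfl | rfl⟩ := hv <;> obtain ⟨j, rfl | rfl⟩ := hw <;>
    simp only [inner_neg_left, inner_neg_right, neg_neg, hsingle] <;>
    split_ifs with hij <;> first | (subst hij; exact absurd rfl hvw) | norm_num

theorem orthoplexVertices_pairwise_one_lt_norm_sub :
    (orthoplexVertices ι).Pairwise fun v w => 1 < ‖v - w‖ := by
  intro v hv w hw hvw
  have hnorm {u} (hu : u ∈ orthoplexVertices ι) : ‖u‖ = 1 :=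
    mem_sphere_zero_iff_norm.mp (orthoplexVertices_subset_sphere ι hu)
  rw [← one_lt_sq_iff₀ (norm_nonneg _), norm_sub_sq_real, hnorm hv, hnorm hw]
  linarith [inner_nonpos_of_mem_orthoplexVertices hv hw hvw]

end Orthoplex

theorem orthoplex_with_center_symmetry_general (K : ℕ)
    (Ω : Set (EuclideanSpace ℝ (Fin K)))
    (hΩ : Ω = insert (0 : EuclideanSpace ℝ (Fin K))
        {v | ∃ i : Fin K, v = EuclideanSpace.single i (1 : ℝ) ∨
              v = -EuclideanSpace.single i (1 : ℝ)})
    (σ : EuclideanSpace ℝ (Fin K) → ℝ)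
    (hσ0 : σ 0 = -1)
    (hσ1 : ∀ ω ∈ Ω, ω ≠ 0 → σ ω = 1) :
    (∀ ω ∈ Ω, ω ≠ 0 →
        nearestNeighbours Ω ω = {(0 : EuclideanSpace ℝ (Fin K))}) ∧
    nearestNeighbours Ω (0 : EuclideanSpace ℝ (Fin K)) = Ω \ {0} ∧
    ∀ ω ∈ Ω,
      σ ω • (∑ᶠ ϖ ∈ nearestNeighbours Ω ω, σ ϖ • (‖ϖ - ω‖⁻¹ • (ϖ - ω))) = ω := by
  obtain rfl : Ω = insert 0 (orthoplexVertices (Fin K)) := hΩ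
  have hsphere := orthoplexVertices_subset_sphere (Fin K)
  have hnorm : ∀ v ∈ orthoplexVertices (Fin K), ‖v‖ = 1 :=
    fun v hv => mem_sphere_zero_iff_norm.mp (hsphere hv)
  have hvertex := fun ω (hω : ω ∈ orthoplexVertices (Fin K)) =>
    nearestNeighbours_insert_zero_of_mem hsphere orthoplexVertices_pairwise_one_lt_norm_sub hω
  have hcentre := nearestNeighbours_insert_zero_zero hsphere
  have hzero : (0 : EuclideanSpace ℝ (Fin K)) ∉ orthoplexVertices (Fin K) :=
    fun h => by simpa using hnorm 0 h
  refine ⟨fun ω hω hω0 => hvertex ω (hω.resolve_left hω0),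
    by rw [hcentre, Set.insert_sdiff_self_of_notMem hzero], ?_⟩
  rintro ω (rfl | hω)
  · have hsummand : ∀ ϖ ∈ orthoplexVertices (Fin K), σ ϖ • (‖ϖ - 0‖⁻¹ • (ϖ - 0)) = ϖ :=
      fun ϖ hϖ => by
        rw [sub_zero, hσ1 ϖ (Or.inr hϖ) (ne_of_mem_of_not_mem hϖ hzero), hnorm ϖ hϖ]
        simp
    have : IsAddTorsionFree (EuclideanSpace ℝ (Fin K)) := .of_module_rat _
    rw [hcentre, finsum_mem_congr rfl hsummand,
      finsum_mem_eq_zero_of_neg_eq (neg_orthoplexVertices _), smul_zero]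
  · rw [hvertex ω hω, finsum_mem_singleton, hσ0, hσ1 ω (Or.inr hω) (ne_of_mem_of_not_mem hω hzero),
      zero_sub, norm_neg, hnorm ω hω]
    simp

/-- **The regular orthoplex with a center, the center carrying the opposite sign, satisfies
the symmetry hypothesis of the multi-soliton construction with `γ = 1`.**
For `Ω = {0} ∪ {±e_1,…,±e_K} ⊂ ℝ^K`, `σ(0) = −1`, `σ = +1` on the vertices: the nearest
neighbours of each vertex `ω ≠ 0` are exactly `{0}`, the nearest neighbours of `0` are all
the `2K` vertices, and `σ(ω) ∑_{ϖ ∈ Ω_ω} σ(ϖ)(ϖ−ω)/|ϖ−ω| = ω` for every `ω ∈ Ω`. -/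
theorem orthoplex_with_center_symmetry (K : ℕ) (hK : 1 ≤ K)
    (Ω : Set (EuclideanSpace ℝ (Fin K)))
    (hΩ : Ω = insert (0 : EuclideanSpace ℝ (Fin K))
        {v | ∃ i : Fin K, v = EuclideanSpace.single i (1 : ℝ) ∨
              v = -EuclideanSpace.single i (1 : ℝ)})
    (σ : EuclideanSpace ℝ (Fin K) → ℝ)
    (hσ0 : σ 0 = -1)
    (hσ1 : ∀ ω ∈ Ω, ω ≠ 0 → σ ω = 1) :
    (∀ ω ∈ Ω, ω ≠ 0 →
        nearestNeighbours Ω ω = {(0 : EuclideanSpace ℝ (Fin K))}) ∧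
    nearestNeighbours Ω (0 : EuclideanSpace ℝ (Fin K)) = Ω \ {0} ∧
    ∀ ω ∈ Ω,
      σ ω • (∑ᶠ ϖ ∈ nearestNeighbours Ω ω, σ ϖ • (‖ϖ - ω‖⁻¹ • (ϖ - ω))) = ω :=
  orthoplex_with_center_symmetry_general K Ω hΩ σ hσ0 hσ1
end
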